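/- For a connected graph G of order n and an integer k with 2 ≤ k ≤ n, 1 ≤ κ_k(G) ≤ n − ⌈k/2⌉, and both bounds are attained (trees attain the lower bound, K_n attains the upper bound). -/

import Mathlib

open SimpleGraph
open scoped Classical

/-- An `S`-Steiner tree in `G`: a subgraph of `G` which is a tree and contains `S`. -/
def IsSteinerTree {V : Type*} (G : SimpleGraph V) (S : Set V) (T : G.Subgraph) : Prop :=
  S ⊆ T.verts ∧ T.coe.IsTree

/-- The generalized local connectivity `κ_G(S)`: the maximum number of pairwise
internally disjoint `S`-Steiner trees in `G`. -/
noncomputable def steinerKappa {V : Type*} (G : SimpleGraph V) (S : Set V) : ℕ :=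
  sSup {n | ∃ T : Fin n → G.Subgraph, (∀ i, IsSteinerTree G S (T i)) ∧
    ∀ i j, i ≠ j → (T i).edgeSet ∩ (T j).edgeSet = ∅ ∧ (T i).verts ∩ (T j).verts = S}

/-- The generalized local edge-connectivity `λ_G(S)`: the maximum number of pairwise
edge-disjoint `S`-Steiner trees in `G`. -/
noncomputable def steinerLambda {V : Type*} (G : SimpleGraph V) (S : Set V) : ℕ :=
  sSup {n | ∃ T : Fin n → G.Subgraph, (∀ i, IsSteinerTree G S (T i)) ∧
    ∀ i j, i ≠ j → (T i).edgeSet ∩ (T j).edgeSet = ∅}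

/-- The generalized `k`-connectivity `κ_k(G)` (with the convention that it is `0`
for a disconnected graph). -/
noncomputable def genKappa {V : Type*} [Fintype V] (G : SimpleGraph V) (k : ℕ) : ℕ :=
  if G.Connected then sInf {m | ∃ S : Finset V, S.card = k ∧ steinerKappa G ↑S = m} else 0

/-- The generalized `k`-edge-connectivity `λ_k(G)` (with the convention that it is `0`
for a disconnected graph). -/
noncomputable def genLambda {V : Type*} [Fintype V] (G : SimpleGraph V) (k : ℕ) : ℕ :=
  if G.Connected then sInf {m | ∃ S : Finset V, S.card = k ∧ steinerLambda G ↑S = m} else 0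

/-- The edge-connectivity `λ(G)`: the minimum number of edges whose removal disconnects `G`. -/
noncomputable def edgeConn {V : Type*} [Fintype V] (G : SimpleGraph V) : ℕ :=
  sInf {m | ∃ F : Set (Sym2 V), F ⊆ G.edgeSet ∧ F.ncard = m ∧ ¬ (G.deleteEdges F).Connected}

/-- The vertex connectivity `κ(G)`: the minimum size of a vertex set whose removal
disconnects `G` or leaves at most one vertex. -/
noncomputable def vertexConn {V : Type*} [Fintype V] (G : SimpleGraph V) : ℕ :=
  sInf {m | ∃ S : Finset V, S.card = m ∧
    (¬ (G.induce ((↑S : Set V)ᶜ)).Connected ∨ Fintype.card V ≤ m + 1)}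

/-!
Upper bound: among internally disjoint `S`-Steiner trees, those with vertex set exactly `S` each
have `|S| - 1` edges inside `S` and are edge-disjoint, so there are at most `⌊|S|/2⌋` of them;
each of the others owns a vertex outside `S` shared with no other tree, so there are at most
`n - |S|` of them. Since `n - |S| + ⌊|S|/2⌋ = n - ⌈|S|/2⌉`, this is the upper bound.

A spanning tree is an `S`-Steiner tree, which gives the lower bound. In a tree every `S`-Steiner
tree contains the path between two given vertices of `S`, so no two of them are edge-disjoint.
In `K_n` the upper bound is attained by the `n - |S|` stars joining a vertex outside `S` to `S`,
together with `⌊|S|/2⌋` pairwise edge-disjoint double stars spanning `S`.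
-/

namespace SimpleGraph

section ParentGraph

variable {α : Type*}

def parentGraph (r : α) (p : α → α) : SimpleGraph α :=
  fromRel fun a b => a ≠ r ∧ p a = b

variable {r : α} {p : α → α}

lemma parentGraph_adj {a b : α} :
    (parentGraph r p).Adj a b ↔ a ≠ b ∧ (a ≠ r ∧ p a = b ∨ b ≠ r ∧ p b = a) :=
  fromRel_adj ..

variable (f : α → ℕ) (hf : ∀ a ≠ r, f (p a) < f a)
include hf

lemma reachable_parentGraph_root (a : α) : (parentGraph r p).Reachable a r := by
  induction h : f a using Nat.strong_induction_on generalizing a with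
  | _ m ih =>
    by_cases ha : a = r
    · exact ha ▸ Reachable.refl _
    have hlt := hf a ha
    have hadj : (parentGraph r p).Adj a (p a) :=
      parentGraph_adj.2 ⟨ne_of_apply_ne f hlt.ne', .inl ⟨ha, rfl⟩⟩
    exact hadj.reachable.trans (ih _ (h ▸ hlt) _ rfl)

lemma edgeFinset_parentGraph [Fintype α] :
    (parentGraph r p).edgeFinset = (Finset.univ.erase r).image fun a => s(a, p a) := by
  ext z
  induction z using Sym2.ind with
  | _ a b =>
    simp only [mem_edgeFinset, mem_edgeSet, parentGraph_adj, Finset.mem_image,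
      Finset.mem_erase, Finset.mem_univ, and_true, Sym2.eq_iff]
    constructor
    · rintro ⟨-, ⟨ha, rfl⟩ | ⟨hb, rfl⟩⟩
      exacts [⟨a, ha, .inl ⟨rfl, rfl⟩⟩, ⟨b, hb, .inr ⟨rfl, rfl⟩⟩]
    · rintro ⟨c, hc, ⟨rfl, rfl⟩ | ⟨rfl, rfl⟩⟩
      · exact ⟨ne_of_apply_ne f (hf c hc).ne', .inl ⟨hc, rfl⟩⟩
      · exact ⟨(ne_of_apply_ne f (hf c hc).ne').symm, .inr ⟨hc, rfl⟩⟩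

lemma isTree_parentGraph [Fintype α] : (parentGraph r p).IsTree := by
  have hconn : (parentGraph r p).Connected :=
    have : Nonempty α := ⟨r⟩
    .mk fun a b => (reachable_parentGraph_root f hf a).trans
      (reachable_parentGraph_root f hf b).symm
  have hinj : Set.InjOn (fun a => s(a, p a)) (Finset.univ.erase r : Finset α) := by
    intro a ha b hb hab
    simp only [Finset.coe_erase, Finset.coe_univ, Set.mem_sdiff, Set.mem_univ,
      Set.mem_singleton_iff, true_and, Sym2.eq_iff] at ha hb hab
    rcases hab with ⟨rfl, -⟩ | ⟨rfl, hpa⟩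
    · rfl
    · have := hf _ ha
      rw [hpa] at this
      exact absurd (this.trans (hf b hb)) (lt_irrefl _)
  refine isTree_iff_connected_and_card.2 ⟨hconn, ?_⟩
  rw [Nat.card_eq_fintype_card, ← edgeFinset_card, edgeFinset_parentGraph f hf,
    Finset.card_image_of_injOn hinj, Finset.card_erase_of_mem (Finset.mem_univ r),
    Finset.card_univ, Nat.card_eq_fintype_card, Nat.sub_add_cancel (Fintype.card_pos_iff.2 ⟨r⟩)]

end ParentGraph

/-- The parent of `a` in the `j`-th double star on `{0, …, k - 1}`, which is rooted at `2j` and has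
second centre `2j + 1`: a vertex of a later pair `{2i, 2i + 1}`, `i > j`, hangs from the centre of
its own parity, every other vertex from the centre of the other parity. Every edge of the `j`-th
double star meets `{2j, 2j + 1}`, and an edge `{2i + e, 2i' + e'}` with `i < i'` can only lie in the
`i`-th double star if `e = e'` and in the `i'`-th one if `e ≠ e'`; so the double stars are
edge-disjoint. -/
def doubleStarParent (j a : ℕ) : ℕ :=
  if j < a / 2 then 2 * j + a % 2 else 2 * j + 1 - a % 2

def doubleStar {k : ℕ} (j : Fin (k / 2)) : SimpleGraph (Fin k) :=
  parentGraph ⟨2 * j, by omega⟩ fun a =>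
    ⟨doubleStarParent j a, by unfold doubleStarParent; split_ifs <;> omega⟩

lemma isTree_doubleStar {k : ℕ} (j : Fin (k / 2)) : (doubleStar j).IsTree :=
  isTree_parentGraph
    (fun a => if (a : ℕ) = 2 * j then 0 else if (a : ℕ) = 2 * j + 1 then 1 else 2) fun a ha => by
      rw [ne_eq, Fin.ext_iff] at ha
      simp only [doubleStarParent]
      split_ifs <;> omega

lemma disjoint_edgeSet_doubleStar {k : ℕ} {j j' : Fin (k / 2)} (h : j ≠ j') :
    Disjoint (doubleStar j).edgeSet (doubleStar j').edgeSet := by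
  rw [Set.disjoint_left]
  intro z hz hz'
  induction z using Sym2.ind with
  | _ a b =>
    rw [Fin.ne_iff_vne] at h
    simp only [mem_edgeSet, doubleStar, parentGraph_adj, ne_eq, Fin.ext_iff, doubleStarParent]
      at hz hz'
    split_ifs at hz hz' <;> omega

namespace Copy

variable {α β : Type*} {A : SimpleGraph α} {B : SimpleGraph β}

def toTop (A : SimpleGraph α) (e : α ↪ β) : Copy A (⊤ : SimpleGraph β) :=
  (Embedding.completeGraph e).toCopy.comp (Copy.ofLE A ⊤ le_top)

@[simp]
lemma coe_toTop (A : SimpleGraph α) (e : α ↪ β) : ⇑(toTop A e) = e :=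
  rfl

lemma toSubgraph_verts (f : Copy A B) : f.toSubgraph.verts = Set.range f := Set.image_univ

lemma toSubgraph_edgeSet (f : Copy A B) : f.toSubgraph.edgeSet = Sym2.map f '' A.edgeSet := by
  simp

lemma isSteinerTree_toSubgraph (f : Copy A B) (hA : A.IsTree) {S : Set β}
    (hS : S ⊆ Set.range f) : IsSteinerTree B S f.toSubgraph :=
  ⟨f.toSubgraph_verts ▸ hS, f.isoToSubgraph.isTree_iff.1 hA⟩

end Copy

lemma Subgraph.ncard_edgeSet_add_one_of_isTree {V : Type*} [Finite V] {G : SimpleGraph V}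
    {H : G.Subgraph} (hH : H.coe.IsTree) : H.edgeSet.ncard + 1 = H.verts.ncard := by
  have := (isTree_iff_connected_and_card.1 hH).2
  rwa [Nat.card_coe_set_eq, Nat.card_coe_set_eq,
    ← Set.ncard_image_of_injective _ (Sym2.map.injective Subtype.val_injective),
    H.image_coe_edgeSet_coe] at this

section SteinerPacking

variable {V ι : Type*} {G : SimpleGraph V}

def IsSteinerPacking (G : SimpleGraph V) (S : Set V) (T : ι → G.Subgraph) : Prop :=
  (∀ i, IsSteinerTree G S (T i)) ∧
    Pairwise fun i j => (T i).edgeSet ∩ (T j).edgeSet = ∅ ∧ (T i).verts ∩ (T j).verts = S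

lemma IsSteinerPacking.comp {κ : Type*} {S : Set V} {T : ι → G.Subgraph}
    (hT : IsSteinerPacking G S T) {f : κ → ι} (hf : Function.Injective f) :
    IsSteinerPacking G S (T ∘ f) :=
  ⟨fun i => hT.1 (f i), hT.2.comp_of_injective hf⟩

lemma steinerKappa_le {S : Set V} {N : ℕ}
    (h : ∀ t (T : Fin t → G.Subgraph), IsSteinerPacking G S T → t ≤ N) :
    steinerKappa G S ≤ N :=
  csSup_le' fun _ ⟨T, hT⟩ => h _ T hT

namespace IsSteinerPacking

variable [Fintype V] [Fintype ι] {S : Finset V} {T : ι → G.Subgraph}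
  (hT : IsSteinerPacking G S T)
include hT

lemma card_filter_verts_ne_le :
    (Finset.univ.filter fun i => (T i).verts ≠ S).card ≤ Fintype.card V - S.card := by
  rw [← Finset.card_compl]
  refine Finset.card_le_card_of_forall_subsingleton (fun i v => v ∈ (T i).verts) ?_ ?_
  · intro i hi
    obtain ⟨v, hv, hvS⟩ := Set.exists_of_ssubset
      ((hT.1 i).1.ssubset_of_ne (Ne.symm (Finset.mem_filter.1 hi).2))
    exact ⟨v, Finset.mem_compl.2 hvS, hv⟩
  · intro v hv i hi j hj
    by_contra hij
    have : v ∈ (T i).verts ∩ (T j).verts := ⟨hi.2, hj.2⟩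
    rw [(hT.2 hij).2] at this
    exact Finset.mem_compl.1 hv this

lemma card_filter_verts_eq_mul_le :
    (Finset.univ.filter fun i => (T i).verts = S).card * (S.card - 1) ≤ S.card.choose 2 := by
  set A := Finset.univ.filter fun i => (T i).verts = S
  set E : ι → Finset (Sym2 V) := fun i => (T i).edgeSet.toFinset
  have hcard : ∀ i ∈ A, (E i).card = S.card - 1 := by
    intro i hi
    have := Subgraph.ncard_edgeSet_add_one_of_isTree (hT.1 i).2
    rw [(Finset.mem_filter.1 hi).2, Set.ncard_coe_finset] at this
    rw [← Set.ncard_eq_toFinset_card']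
    omega
  have hsub : A.biUnion E ⊆ S.offDiag.image Sym2.mk.uncurry := by
    intro z hz
    obtain ⟨i, hi, hz⟩ := Finset.mem_biUnion.1 hz
    rw [Set.mem_toFinset] at hz
    induction z using Sym2.ind with
    | _ u v =>
      have hu := (T i).edge_vert hz
      have hv := (T i).edge_vert hz.symm
      rw [(Finset.mem_filter.1 hi).2, Finset.mem_coe] at hu hv
      exact Finset.mem_image.2 ⟨(u, v), Finset.mem_offDiag.2 ⟨hu, hv, hz.ne⟩, rfl⟩
  have hdisj : (A : Set ι).PairwiseDisjoint E := fun i _ j _ hij => by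
    rw [Function.onFun, Set.disjoint_toFinset, Set.disjoint_iff_inter_eq_empty]
    exact (hT.2 hij).1
  calc A.card * (S.card - 1) = (A.biUnion E).card := by
        rw [Finset.card_biUnion hdisj, Finset.sum_congr rfl hcard, Finset.sum_const, smul_eq_mul]
    _ ≤ S.card.choose 2 := (Finset.card_le_card hsub).trans (Sym2.card_image_offDiag S).le

theorem card_le (hS : 2 ≤ S.card) : Fintype.card ι ≤ Fintype.card V - S.card + S.card / 2 := by
  have hsplit := Finset.card_filter_add_card_filter_not (s := Finset.univ)
    (fun i => (T i).verts = S)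
  have hne := hT.card_filter_verts_ne_le
  have heq := hT.card_filter_verts_eq_mul_le
  rw [Nat.choose_two_right, Nat.le_div_iff_mul_le two_pos, mul_right_comm, mul_comm _ 2] at heq
  have := Nat.le_of_mul_le_mul_right heq (by omega)
  rw [Finset.card_univ] at hsplit
  simp only [ne_eq] at hne
  omega

lemma card_le_steinerKappa (hS : 2 ≤ S.card) : Fintype.card ι ≤ steinerKappa G S :=
  le_csSup ⟨_, fun _ ⟨T', hT'⟩ => by simpa using card_le (T := T') hT' hS⟩
    ⟨T ∘ (Fintype.equivFin ι).symm, hT.comp (Fintype.equivFin ι).symm.injective⟩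

end IsSteinerPacking

lemma steinerKappa_le_card_sub_add_half [Fintype V] {S : Finset V} (hS : 2 ≤ S.card) :
    steinerKappa G S ≤ Fintype.card V - S.card + S.card / 2 :=
  steinerKappa_le fun _ _ hT => by simpa using hT.card_le hS

lemma one_le_steinerKappa [Fintype V] (hG : G.Connected) {S : Finset V} (hS : 2 ≤ S.card) :
    1 ≤ steinerKappa G S := by
  obtain ⟨H, hle, hH⟩ := hG.exists_isTree_le
  have hT : IsSteinerPacking G S fun _ : Unit => (Copy.ofLE H G hle).toSubgraph :=
    ⟨fun _ => (Copy.ofLE H G hle).isSteinerTree_toSubgraph hH fun v _ => ⟨v, rfl⟩,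
      Subsingleton.pairwise⟩
  simpa using hT.card_le_steinerKappa hS

lemma IsSteinerTree.edges_subset_of_isTree (hG : G.IsTree) {S : Set V} {T : G.Subgraph}
    (hT : IsSteinerTree G S T) {a b : V} (ha : a ∈ S) (hb : b ∈ S) {p : G.Walk a b}
    (hp : p.IsPath) : ∀ e ∈ p.edges, e ∈ T.edgeSet := by
  obtain ⟨w⟩ := hT.2.connected.preconnected ⟨a, hT.1 ha⟩ ⟨b, hT.1 hb⟩
  let q : G.Path a b := (w.map T.hom).toPath
  obtain rfl : p = q := (hG.existsUnique_path a b).unique hp q.2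
  intro e he
  obtain ⟨e', he', rfl⟩ :=
    List.mem_map.1 (Walk.edges_map _ _ ▸ Walk.edges_toPath_subset_edges _ he)
  exact T.image_coe_edgeSet_coe ▸ ⟨e', w.edges_subset_edgeSet he', rfl⟩

lemma steinerKappa_le_one_of_isTree (hG : G.IsTree) {S : Set V} (hS : S.Nontrivial) :
    steinerKappa G S ≤ 1 := by
  obtain ⟨a, ha, b, hb, hab⟩ := hS
  obtain ⟨p, hp⟩ := (hG.existsUnique_path a b).exists
  obtain ⟨e, he⟩ : ∃ e, e ∈ p.edges := by
    cases p with
    | nil => exact absurd rfl hab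
    | cons h q => exact ⟨_, List.mem_cons_self⟩
  refine steinerKappa_le fun t T hT => ?_
  rw [← Fintype.card_fin t]
  refine Fintype.card_le_one_iff.2 fun i j => ?_
  by_contra hij
  have : e ∈ (T i).edgeSet ∩ (T j).edgeSet :=
    ⟨(hT.1 i).edges_subset_of_isTree hG ha hb hp e he,
      (hT.1 j).edges_subset_of_isTree hG ha hb hp e he⟩
  rw [(hT.2 hij).1] at this
  exact this

end SteinerPacking

section CompleteGraph

variable {V : Type*} {k : ℕ} (e : Fin k ↪ V)

def starSubgraph (c : V) (hc : c ∉ Set.range e) : (⊤ : SimpleGraph V).Subgraph :=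
  (Copy.toTop (starGraph none) (e.optionElim c hc)).toSubgraph

def doubleStarSubgraph (j : Fin (k / 2)) : (⊤ : SimpleGraph V).Subgraph :=
  (Copy.toTop (doubleStar j) e).toSubgraph

lemma starSubgraph_verts (c : V) (hc : c ∉ Set.range e) :
    (starSubgraph e c hc).verts = insert c (Set.range e) := by
  rw [starSubgraph, Copy.toSubgraph_verts, Copy.coe_toTop, Option.range_eq]
  rfl

lemma mem_of_mem_edgeSet_starSubgraph {c : V} {hc : c ∉ Set.range e} {z : Sym2 V}
    (hz : z ∈ (starSubgraph e c hc).edgeSet) : c ∈ z := by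
  rw [starSubgraph, Copy.toSubgraph_edgeSet] at hz
  obtain ⟨z, hz, rfl⟩ := hz
  induction z using Sym2.ind with
  | _ a b =>
    rw [mem_edgeSet, starGraph_adj] at hz
    rcases hz.2 with rfl | rfl
    · exact Sym2.mem_map.2 ⟨none, Sym2.mem_mk_left _ _, rfl⟩
    · exact Sym2.mem_map.2 ⟨none, Sym2.mem_mk_right _ _, rfl⟩

lemma doubleStarSubgraph_verts (j : Fin (k / 2)) :
    (doubleStarSubgraph e j).verts = Set.range e := by
  rw [doubleStarSubgraph, Copy.toSubgraph_verts, Copy.coe_toTop]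

lemma starSubgraph_doubleStarSubgraph_disjoint (c : V) (hc : c ∉ Set.range e) (j : Fin (k / 2)) :
    (starSubgraph e c hc).edgeSet ∩ (doubleStarSubgraph e j).edgeSet = ∅ ∧
      (starSubgraph e c hc).verts ∩ (doubleStarSubgraph e j).verts = Set.range e := by
  refine ⟨Set.eq_empty_iff_forall_notMem.2 fun z ⟨hz, hz'⟩ => hc ?_, ?_⟩
  · have := Subgraph.mem_verts_of_mem_edge hz' (mem_of_mem_edgeSet_starSubgraph e hz)
    rwa [doubleStarSubgraph_verts] at this
  · rw [starSubgraph_verts, doubleStarSubgraph_verts, Set.insert_inter_of_notMem hc,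
      Set.inter_self]

lemma starSubgraph_disjoint {c c' : V} (hc : c ∉ Set.range e) (hc' : c' ∉ Set.range e)
    (hcc' : c ≠ c') :
    (starSubgraph e c hc).edgeSet ∩ (starSubgraph e c' hc').edgeSet = ∅ ∧
      (starSubgraph e c hc).verts ∩ (starSubgraph e c' hc').verts = Set.range e := by
  refine ⟨Set.eq_empty_iff_forall_notMem.2 fun z ⟨hz, hz'⟩ => ?_, ?_⟩
  · have := Subgraph.mem_verts_of_mem_edge hz (mem_of_mem_edgeSet_starSubgraph e hz')
    rw [starSubgraph_verts] at this
    exact this.elim (hcc'.symm ·) hc'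
  · ext x
    simp only [starSubgraph_verts, Set.mem_inter_iff, Set.mem_insert_iff]
    constructor
    · rintro ⟨hx | hx, hx' | hx'⟩
      exacts [absurd (hx.symm.trans hx') hcc', hx', hx, hx]
    · exact fun hx => ⟨.inr hx, .inr hx⟩

lemma doubleStarSubgraph_disjoint {j j' : Fin (k / 2)} (hjj' : j ≠ j') :
    (doubleStarSubgraph e j).edgeSet ∩ (doubleStarSubgraph e j').edgeSet = ∅ ∧
      (doubleStarSubgraph e j).verts ∩ (doubleStarSubgraph e j').verts = Set.range e := by
  refine ⟨?_, by simp only [doubleStarSubgraph_verts, Set.inter_self]⟩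
  rw [← Set.disjoint_iff_inter_eq_empty]
  simp only [doubleStarSubgraph, Copy.toSubgraph_edgeSet, Copy.coe_toTop,
    Set.disjoint_image_iff (Sym2.map.injective e.injective)]
  exact disjoint_edgeSet_doubleStar hjj'

lemma isSteinerPacking_top {S : Set V} (he : Set.range e = S) :
    IsSteinerPacking ⊤ S
      (Sum.elim (fun c : ↥Sᶜ => starSubgraph e c (he ▸ c.2)) (doubleStarSubgraph e)) := by
  subst he
  refine ⟨Sum.rec (fun c => Copy.isSteinerTree_toSubgraph _ (isTree_starGraph none)
    fun _ ⟨i, hi⟩ => ⟨some i, hi⟩) fun j => Copy.isSteinerTree_toSubgraph _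
    (isTree_doubleStar j) subset_rfl, ?_⟩
  rintro (c | j) (c' | j') h <;> simp only [Sum.elim_inl, Sum.elim_inr]
  · exact starSubgraph_disjoint e _ _ fun h' => h (congrArg Sum.inl (Subtype.ext h'))
  · exact starSubgraph_doubleStarSubgraph_disjoint e c _ j'
  · rw [Set.inter_comm, Set.inter_comm (Subgraph.verts _)]
    exact starSubgraph_doubleStarSubgraph_disjoint e c' _ j
  · exact doubleStarSubgraph_disjoint e fun h' => h (congrArg Sum.inr h')

end CompleteGraph

lemma steinerKappa_top {V : Type*} [Fintype V] {S : Finset V} (hS : 2 ≤ S.card) :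
    steinerKappa (⊤ : SimpleGraph V) S = Fintype.card V - S.card + S.card / 2 := by
  refine le_antisymm (steinerKappa_le_card_sub_add_half hS) ?_
  let e : Fin S.card ↪ V := S.equivFin.symm.toEmbedding.trans (.subtype _)
  have he : Set.range e = S := Set.ext fun v =>
    ⟨by rintro ⟨i, rfl⟩; exact (S.equivFin.symm i).2, fun hv => ⟨S.equivFin ⟨v, hv⟩, by simp [e]⟩⟩
  have := (isSteinerPacking_top e he).card_le_steinerKappa hS
  rw [Fintype.card_sum, Fintype.card_compl_set] at this
  simpa using this

section GenKappa

variable {V : Type*} [Fintype V] {G : SimpleGraph V}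

lemma genKappa_le_steinerKappa (hG : G.Connected) (S : Finset V) :
    genKappa G S.card ≤ steinerKappa G S := by
  rw [genKappa, if_pos hG]
  exact Nat.sInf_le ⟨S, rfl, rfl⟩

lemma le_genKappa {k m : ℕ} (hG : G.Connected) (hk : k ≤ Fintype.card V)
    (h : ∀ S : Finset V, S.card = k → m ≤ steinerKappa G S) : m ≤ genKappa G k := by
  obtain ⟨S, -, hS⟩ := Finset.exists_subset_card_eq (s := Finset.univ) (by simpa using hk)
  rw [genKappa, if_pos hG]
  exact le_csInf ⟨_, S, hS, rfl⟩ fun _ ⟨S, hS, hm⟩ => hm ▸ h S hS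

end GenKappa

end SimpleGraph

theorem stmt4 {V : Type*} [Fintype V] (G : SimpleGraph V) (n k : ℕ)
    (hn : Fintype.card V = n) (hG : G.Connected) (hk : 2 ≤ k) (hkn : k ≤ n) :
    (1 ≤ genKappa G k ∧ genKappa G k ≤ n - (k + 1) / 2) ∧
    (G.IsTree → genKappa G k = 1) ∧
    (G = ⊤ → genKappa G k = n - (k + 1) / 2) := by
  subst hn
  obtain ⟨S, -, rfl⟩ := Finset.exists_subset_card_eq (s := Finset.univ) (by simpa using hkn)
  have hone : 1 ≤ genKappa G S.card :=
    le_genKappa hG hkn fun S' hS' => one_le_steinerKappa hG (hS' ▸ hk)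
  have hupper : genKappa G S.card ≤ Fintype.card V - (S.card + 1) / 2 :=
    (genKappa_le_steinerKappa hG S).trans <|
      (steinerKappa_le_card_sub_add_half hk).trans_eq (by omega)
  refine ⟨⟨hone, hupper⟩, fun hT => le_antisymm ?_ hone, ?_⟩
  · exact (genKappa_le_steinerKappa hG S).trans
      (steinerKappa_le_one_of_isTree hT (Finset.one_lt_card_iff_nontrivial.1 hk))
  · rintro rfl
    refine le_antisymm hupper (le_genKappa hG hkn fun S' hS' => ?_)
    rw [steinerKappa_top (hS' ▸ hk), hS']
    omega
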